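/- Fix an integer n and for integers t with 3 ≤ t ≤ n−t, let g(t) = (t−1)(n−t−1)+2 + sqrt( ((t−1)(n−t−1)+2)² − 4(2t−3)(2(n−t)−3) ). Then g is strictly increasing in t on this range; consequently among pairs (r, n−r) with 3 ≤ r ≤ n−r, the quantity f(r, n−r) = sqrt(g(r)/2) is maximized uniquely at r = ⌊n/2⌋. -/

import Mathlib

/-!
Writing `p = (t - 1)(n - t - 1)`, the discriminant in `g` simplifies to `(p - 6)² + 8n - 52`, so
`g = p + 2 + √((p - 6)² + 8n - 52)` is strictly increasing in `p` once `p ≥ 6`. Moreover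
`p(t₂) - p(t₁) = (t₂ - t₁)(n - t₁ - t₂)`, which is positive for `t₁ < t₂ ≤ n - t₂`.
-/

/-- The function `g` from the paper, with `s = n - t`. -/
noncomputable def g12 (n t : ℕ) : ℝ :=
  ((t : ℝ) - 1) * ((n : ℝ) - (t : ℝ) - 1) + 2 +
    Real.sqrt ((((t : ℝ) - 1) * ((n : ℝ) - (t : ℝ) - 1) + 2) ^ 2 -
      4 * (2 * (t : ℝ) - 3) * (2 * ((n : ℝ) - (t : ℝ)) - 3))

open Set

/-- The product `(r - 1)(s - 1)` of the paper, with `r = t` and `s = n - t`. -/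
noncomputable def predProd (n t : ℕ) : ℝ := ((t : ℝ) - 1) * ((n : ℝ) - t - 1)

lemma g12_eq (n t : ℕ) :
    g12 n t = predProd n t + 2 + √((predProd n t - 6) ^ 2 + (8 * n - 52)) := by
  unfold g12 predProd
  ring_nf

lemma predProd_lt_predProd {n t₁ t₂ : ℕ} (hlt : t₁ < t₂) (hsum : t₁ + t₂ < n) :
    predProd n t₁ < predProd n t₂ := by
  have hlt' : (t₁ : ℝ) < t₂ := by exact_mod_cast hlt
  have hsum' : (t₁ : ℝ) + t₂ < n := by exact_mod_cast hsum
  have hdiff : predProd n t₂ - predProd n t₁ = ((t₂ : ℝ) - t₁) * (n - t₁ - t₂) := by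
    unfold predProd
    ring
  nlinarith [mul_pos (sub_pos.2 hlt') (by linarith : (0 : ℝ) < n - t₁ - t₂)]

lemma six_le_predProd {n t : ℕ} (h3 : 3 ≤ t) (h4 : t + 4 ≤ n) : 6 ≤ predProd n t := by
  have ht : (3 : ℝ) ≤ t := by exact_mod_cast h3
  have hn : (t : ℝ) + 4 ≤ n := by exact_mod_cast h4
  unfold predProd
  nlinarith

lemma strictMonoOn_add_sqrt_sub_sq_add (a c : ℝ) :
    StrictMonoOn (fun x : ℝ => x + √((x - a) ^ 2 + c)) (Ici a) := by
  intro x hx y hy hxy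
  have hsq : (x - a) ^ 2 ≤ (y - a) ^ 2 := by
    gcongr
    exact sub_nonneg.2 hx
  have hsqrt : √((x - a) ^ 2 + c) ≤ √((y - a) ^ 2 + c) := by gcongr
  exact add_lt_add_of_lt_of_le hxy hsqrt

lemma g12_lt_g12 {n t₁ t₂ : ℕ} (h3 : 3 ≤ t₁) (hlt : t₁ < t₂) (hle : t₂ ≤ n - t₂) :
    g12 n t₁ < g12 n t₂ := by
  have hp₁ : 6 ≤ predProd n t₁ := six_le_predProd h3 (by omega)
  have hp : predProd n t₁ < predProd n t₂ := predProd_lt_predProd hlt (by omega)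
  have key := strictMonoOn_add_sqrt_sub_sq_add 6 (8 * n - 52) hp₁ (hp₁.trans hp.le) hp
  rw [g12_eq, g12_eq]
  linarith

lemma g12_pos {n t : ℕ} (h3 : 3 ≤ t) (hle : t ≤ n - t) : 0 < g12 n t := by
  have ht : (3 : ℝ) ≤ t := by exact_mod_cast h3
  have hn : 2 * (t : ℝ) ≤ n := by exact_mod_cast (by omega : 2 * t ≤ n)
  have hp : 0 ≤ predProd n t := by
    unfold predProd
    nlinarith
  rw [g12_eq]
  positivity

theorem g_strictMono_and_max_general (n : ℕ) :
    (∀ t₁ t₂ : ℕ, 3 ≤ t₁ → t₁ < t₂ → t₂ ≤ n - t₂ → g12 n t₁ < g12 n t₂) ∧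
    (∀ r : ℕ, 3 ≤ r → r ≤ n - r → r ≠ n / 2 →
      Real.sqrt (g12 n r / 2) < Real.sqrt (g12 n (n / 2) / 2)) := by
  refine ⟨fun t₁ t₂ => g12_lt_g12, fun r h3 hle hne => ?_⟩
  have hr : r < n / 2 := by omega
  have hg : g12 n r < g12 n (n / 2) := g12_lt_g12 h3 hr (by omega)
  exact Real.sqrt_lt_sqrt (by linarith [g12_pos h3 hle]) (by linarith)

/-- `g` is strictly increasing on `3 ≤ t ≤ n - t`; consequently `f(r, n-r) = sqrt(g(r)/2)`
is maximized uniquely at `r = ⌊n/2⌋` among `3 ≤ r ≤ n - r`. -/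
theorem g_strictMono_and_max (n : ℕ) (hn : 7 ≤ n) :
    (∀ t₁ t₂ : ℕ, 3 ≤ t₁ → t₁ < t₂ → t₂ ≤ n - t₂ → g12 n t₁ < g12 n t₂) ∧
    (∀ r : ℕ, 3 ≤ r → r ≤ n - r → r ≠ n / 2 →
      Real.sqrt (g12 n r / 2) < Real.sqrt (g12 n (n / 2) / 2)) :=
  g_strictMono_and_max_general n
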